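/- arXiv:1805.07871 — 2 statements merged into one kernel-verified Lean document; each statement's English description precedes it below -/
import Mathlib

section
/- Let 𝕐 and ℤ be nonempty finite sets, 𝕏 = 𝕐 × ℤ, K a positive integer, and f₁,…,f_K : 𝕏 → ℝ feature functions. Let θ_E, θ' ∈ [0,1]^K, let y₁,…,y_n ∈ 𝕐 be observed data, and let ε > 0 and ε_s ≥ 0. If for every k ∈ {1,…,K} the occlusion-corrected empirical feature expectation under the expert's weights is close to the learned model's feature expectation, i.e. |(1/n) Σ_{j=1}^n E_{p_{θ_E}}[f_k | y_j] − E_{p_{θ'}}[f_k]| ≤ ε/(2K) + ε_s, then the marginal log-likelihoods satisfy LL(θ_E | y₁,…,y_n) − LL(θ' | y₁,…,y_n) ≤ ε + 2K·ε_s. (This is the deterministic core of the paper's Theorem 2, with ε_latent = ε + 2K·ε_sampling.) -/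
open Finset

/-- Partition function `Z(θ) = ∑_x exp(∑_k θ_k f_k(x))` on `X = Y × Z`. -/
noncomputable def partitionZ {Y Z : Type*} [Fintype Y] [Fintype Z] {K : ℕ}
    (f : Fin K → Y × Z → ℝ) (θ : Fin K → ℝ) : ℝ :=
  ∑ x : Y × Z, Real.exp (∑ k, θ k * f k x)

/-- Gibbs (maximum-entropy) distribution `p_θ(x) = exp(∑_k θ_k f_k(x)) / Z(θ)`. -/
noncomputable def gibbs {Y Z : Type*} [Fintype Y] [Fintype Z] {K : ℕ}
    (f : Fin K → Y × Z → ℝ) (θ : Fin K → ℝ) (x : Y × Z) : ℝ :=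
  Real.exp (∑ k, θ k * f k x) / partitionZ f θ

/-- Marginal of the Gibbs distribution on `Y`: `p_θ(y) = ∑_z p_θ(y,z)`. -/
noncomputable def gibbsMarg {Y Z : Type*} [Fintype Y] [Fintype Z] {K : ℕ}
    (f : Fin K → Y × Z → ℝ) (θ : Fin K → ℝ) (y : Y) : ℝ :=
  ∑ z : Z, gibbs f θ (y, z)

/-- Conditional of the Gibbs distribution: `p_θ(z|y) = p_θ(y,z) / p_θ(y)`. -/
noncomputable def gibbsCond {Y Z : Type*} [Fintype Y] [Fintype Z] {K : ℕ}
    (f : Fin K → Y × Z → ℝ) (θ : Fin K → ℝ) (z : Z) (y : Y) : ℝ :=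
  gibbs f θ (y, z) / gibbsMarg f θ y

/-- Conditional feature expectation `E_{p_θ}[f_k | y] = ∑_z p_θ(z|y) f_k(y,z)`. -/
noncomputable def condFeatExp {Y Z : Type*} [Fintype Y] [Fintype Z] {K : ℕ}
    (f : Fin K → Y × Z → ℝ) (θ : Fin K → ℝ) (k : Fin K) (y : Y) : ℝ :=
  ∑ z : Z, gibbsCond f θ z y * f k (y, z)

/-- Model feature expectation `E_{p_θ}[f_k] = ∑_x p_θ(x) f_k(x)`. -/
noncomputable def featExp {Y Z : Type*} [Fintype Y] [Fintype Z] {K : ℕ}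
    (f : Fin K → Y × Z → ℝ) (θ : Fin K → ℝ) (k : Fin K) : ℝ :=
  ∑ x : Y × Z, gibbs f θ x * f k x

/-- Marginal average log-likelihood `LL(θ | y₁,…,y_n) = (1/n) ∑_j log p_θ(y_j)`. -/
noncomputable def LLmarg {Y Z : Type*} [Fintype Y] [Fintype Z] {K : ℕ}
    (f : Fin K → Y × Z → ℝ) (θ : Fin K → ℝ) {n : ℕ} (ys : Fin n → Y) : ℝ :=
  (1 / (n : ℝ)) * ∑ j, Real.log (gibbsMarg f θ (ys j))

section AuxLemmas

open Finset

lemma jensen_exp {α : Type*} [Fintype α] (w g : α → ℝ) (h0 : ∀ i, 0 ≤ w i)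
    (h1 : ∑ i, w i = 1) :
    Real.exp (∑ i, w i * g i) ≤ ∑ i, w i * Real.exp (g i) := by
  have := convexOn_exp.map_sum_le (t := Finset.univ) (w := w) (p := g)
    (fun i _ => h0 i) h1 (fun i _ => Set.mem_univ _)
  simpa [smul_eq_mul] using this

lemma sum_mul_sum_swap {α : Type*} [Fintype α] {K : ℕ} (g : α → ℝ) (c : Fin K → ℝ)
    (F : Fin K → α → ℝ) :
    ∑ x, g x * ∑ k, c k * F k x = ∑ k, c k * ∑ x, g x * F k x := by
  have h : ∀ x, g x * ∑ k, c k * F k x = ∑ k, c k * (g x * F k x) := fun x => by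
    rw [Finset.mul_sum]; exact Finset.sum_congr rfl fun k _ => by ring
  simp_rw [h]
  rw [Finset.sum_comm]
  simp_rw [← Finset.mul_sum]

variable {Y Z : Type*} [Fintype Y] [Nonempty Y] [Fintype Z] [Nonempty Z] {K : ℕ}
  (f : Fin K → Y × Z → ℝ)

lemma partitionZ_pos (θ : Fin K → ℝ) : 0 < partitionZ f θ :=
  Finset.sum_pos (fun _ _ => Real.exp_pos _) univ_nonempty

lemma gibbs_pos (θ : Fin K → ℝ) (x : Y × Z) : 0 < gibbs f θ x :=
  div_pos (Real.exp_pos _) (partitionZ_pos f θ)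

lemma gibbsMarg_pos (θ : Fin K → ℝ) (y : Y) : 0 < gibbsMarg f θ y :=
  Finset.sum_pos (fun z _ => gibbs_pos f θ (y, z)) univ_nonempty

lemma gibbsCond_nonneg (θ : Fin K → ℝ) (z : Z) (y : Y) : 0 ≤ gibbsCond f θ z y :=
  le_of_lt (div_pos (gibbs_pos f θ (y, z)) (gibbsMarg_pos f θ y))

lemma gibbsCond_sum_one (θ : Fin K → ℝ) (y : Y) : ∑ z : Z, gibbsCond f θ z y = 1 := by
  unfold gibbsCond
  rw [← Finset.sum_div]
  exact div_self (ne_of_gt (gibbsMarg_pos f θ y))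

lemma gibbs_nonneg (θ : Fin K → ℝ) (x : Y × Z) : 0 ≤ gibbs f θ x :=
  (gibbs_pos f θ x).le

lemma gibbs_sum_one (θ : Fin K → ℝ) : ∑ x : Y × Z, gibbs f θ x = 1 := by
  unfold gibbs
  rw [← Finset.sum_div]
  exact div_self (ne_of_gt (partitionZ_pos f θ))

/-- Jensen lower bound on the log partition function difference. -/
lemma logZ_diff_le (θE θ' : Fin K → ℝ) :
    Real.log (partitionZ f θ') - Real.log (partitionZ f θE) ≤
      ∑ k, (θ' k - θE k) * featExp f θ' k := by
  set d : Y × Z → ℝ := fun x => ∑ k, (θE k - θ' k) * f k x with hd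
  have hZ' := partitionZ_pos f θ'
  have hZE := partitionZ_pos f θE
  have hterm : ∀ x : Y × Z, gibbs f θ' x * Real.exp (d x)
      = Real.exp (∑ k, θE k * f k x) / partitionZ f θ' := by
    intro x
    unfold gibbs
    rw [div_mul_eq_mul_div, ← Real.exp_add]
    congr 2
    rw [← Finset.sum_add_distrib]
    exact Finset.sum_congr rfl fun k _ => by ring
  have hsum : ∑ x : Y × Z, gibbs f θ' x * Real.exp (d x)
      = partitionZ f θE / partitionZ f θ' := by
    simp_rw [hterm]
    rw [← Finset.sum_div]
    rfl
  have hjen := jensen_exp (gibbs f θ') d (gibbs_nonneg f θ') (gibbs_sum_one f θ')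
  rw [hsum] at hjen
  have hlog : ∑ x : Y × Z, gibbs f θ' x * d x ≤
      Real.log (partitionZ f θE) - Real.log (partitionZ f θ') := by
    have := Real.log_le_log (Real.exp_pos _) hjen
    rwa [Real.log_exp, Real.log_div (ne_of_gt hZE) (ne_of_gt hZ')] at this
  have hswap : ∑ x : Y × Z, gibbs f θ' x * d x
      = ∑ k, (θE k - θ' k) * featExp f θ' k := by
    rw [hd]
    rw [sum_mul_sum_swap (gibbs f θ') (fun k => θE k - θ' k) f]
    rfl
  rw [hswap] at hlog
  have : ∑ k, (θ' k - θE k) * featExp f θ' k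
      = -∑ k, (θE k - θ' k) * featExp f θ' k := by
    rw [← Finset.sum_neg_distrib]
    exact Finset.sum_congr rfl fun k _ => by ring
  rw [this]
  linarith

/-- Per-observation EM / Jensen bound. -/
lemma log_marg_diff_le (θE θ' : Fin K → ℝ) (y : Y) :
    Real.log (gibbsMarg f θE y) - Real.log (gibbsMarg f θ' y) ≤
      (∑ k, (θE k - θ' k) * condFeatExp f θE k y)
        + (Real.log (partitionZ f θ') - Real.log (partitionZ f θE)) := by
  set q : Z → ℝ := fun z => gibbsCond f θE z y with hq
  set e : Z → ℝ := fun z => ∑ k, (θ' k - θE k) * f k (y, z) with he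
  have hZ' := partitionZ_pos f θ'
  have hZE := partitionZ_pos f θE
  have hmE := gibbsMarg_pos f θE y
  have hm' := gibbsMarg_pos f θ' y
  have hterm : ∀ z : Z, q z * Real.exp (e z)
      = Real.exp (∑ k, θ' k * f k (y, z)) / (partitionZ f θE * gibbsMarg f θE y) := by
    intro z
    simp only [hq, he]
    unfold gibbsCond gibbs
    rw [div_div, div_mul_eq_mul_div, ← Real.exp_add]
    congr 2
    rw [← Finset.sum_add_distrib]
    exact Finset.sum_congr rfl fun k _ => by ring
  have hsum : ∑ z : Z, q z * Real.exp (e z)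
      = gibbsMarg f θ' y * partitionZ f θ' / (partitionZ f θE * gibbsMarg f θE y) := by
    simp_rw [hterm]
    rw [← Finset.sum_div]
    congr 1
    have : gibbsMarg f θ' y = (∑ z : Z, Real.exp (∑ k, θ' k * f k (y, z))) / partitionZ f θ' := by
      unfold gibbsMarg gibbs
      rw [← Finset.sum_div]
    rw [this]
    field_simp
  have hjen := jensen_exp q e (fun z => gibbsCond_nonneg f θE z y) (gibbsCond_sum_one f θE y)
  rw [hsum] at hjen
  have hlog : ∑ z : Z, q z * e z ≤
      Real.log (gibbsMarg f θ' y) + Real.log (partitionZ f θ')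
        - (Real.log (partitionZ f θE) + Real.log (gibbsMarg f θE y)) := by
    have := Real.log_le_log (Real.exp_pos _) hjen
    rwa [Real.log_exp, Real.log_div (by positivity) (by positivity),
      Real.log_mul (ne_of_gt hm') (ne_of_gt hZ'),
      Real.log_mul (ne_of_gt hZE) (ne_of_gt hmE)] at this
  have hswap : ∑ z : Z, q z * e z
      = ∑ k, (θ' k - θE k) * condFeatExp f θE k y := by
    simp only [hq, he]
    rw [sum_mul_sum_swap (fun z => gibbsCond f θE z y) (fun k => θ' k - θE k)
      (fun k z => f k (y, z))]
    rfl
  rw [hswap] at hlog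
  have hneg : ∑ k, (θE k - θ' k) * condFeatExp f θE k y
      = -∑ k, (θ' k - θE k) * condFeatExp f θE k y := by
    rw [← Finset.sum_neg_distrib]
    exact Finset.sum_congr rfl fun k _ => by ring
  rw [hneg]
  linarith

end AuxLemmas

/-- Deterministic core of the paper's Theorem 2: if the occlusion-corrected
empirical feature expectation under the expert's weights is within
`ε/(2K) + ε_s` of the learned model's feature expectation for every feature,
then the marginal log-likelihood loss is at most `ε + 2K·ε_s`. -/



theorem latent_LL_loss_bound
    {Y Z : Type*} [Fintype Y] [Nonempty Y] [Fintype Z] [Nonempty Z]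
    {K : ℕ} (hK : 0 < K)
    (f : Fin K → Y × Z → ℝ)
    (θE θ' : Fin K → ℝ)
    (hθE : ∀ k, θE k ∈ Set.Icc (0:ℝ) 1) (hθ' : ∀ k, θ' k ∈ Set.Icc (0:ℝ) 1)
    {n : ℕ} (hn : 0 < n) (ys : Fin n → Y)
    (ε εs : ℝ) (hε : 0 < ε) (hεs : 0 ≤ εs)
    (hclose : ∀ k,
      |(1 / (n : ℝ)) * (∑ j, condFeatExp f θE k (ys j)) - featExp f θ' k| ≤
        ε / (2 * (K : ℝ)) + εs) :
    LLmarg f θE ys - LLmarg f θ' ys ≤ ε + 2 * (K : ℝ) * εs := by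
  have hnR : (0:ℝ) < n := by exact_mod_cast hn
  have hKR : (0:ℝ) < K := by exact_mod_cast hK
  -- step 1: pointwise bound summed over j
  have h1 : LLmarg f θE ys - LLmarg f θ' ys ≤
      (∑ k, (θE k - θ' k) * ((1 / (n : ℝ)) * ∑ j, condFeatExp f θE k (ys j)))
        + (Real.log (partitionZ f θ') - Real.log (partitionZ f θE)) := by
    unfold LLmarg
    rw [← mul_sub, ← Finset.sum_sub_distrib]
    have hsum : ∑ j, (Real.log (gibbsMarg f θE (ys j)) - Real.log (gibbsMarg f θ' (ys j)))
        ≤ ∑ j, ((∑ k, (θE k - θ' k) * condFeatExp f θE k (ys j))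
            + (Real.log (partitionZ f θ') - Real.log (partitionZ f θE))) :=
      Finset.sum_le_sum fun j _ => log_marg_diff_le f θE θ' (ys j)
    have h2 : (1 / (n : ℝ)) * ∑ j, (Real.log (gibbsMarg f θE (ys j)) - Real.log (gibbsMarg f θ' (ys j)))
        ≤ (1 / (n : ℝ)) * ∑ j, ((∑ k, (θE k - θ' k) * condFeatExp f θE k (ys j))
            + (Real.log (partitionZ f θ') - Real.log (partitionZ f θE))) :=
      mul_le_mul_of_nonneg_left hsum (by positivity)
    refine h2.trans (le_of_eq ?_)
    rw [Finset.sum_add_distrib, mul_add]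
    congr 1
    · simp_rw [Finset.mul_sum]
      rw [Finset.sum_comm]
      exact Finset.sum_congr rfl fun k _ => Finset.sum_congr rfl fun j _ => by ring
    · rw [Finset.sum_const, Finset.card_univ, Fintype.card_fin, nsmul_eq_mul]
      field_simp
  -- step 2: log-partition bound
  have h3 := logZ_diff_le f θE θ'
  have h4 : LLmarg f θE ys - LLmarg f θ' ys ≤
      ∑ k, (θE k - θ' k) *
        ((1 / (n : ℝ)) * (∑ j, condFeatExp f θE k (ys j)) - featExp f θ' k) := by
    have : ∑ k, (θE k - θ' k) *
          ((1 / (n : ℝ)) * (∑ j, condFeatExp f θE k (ys j)) - featExp f θ' k)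
        = (∑ k, (θE k - θ' k) * ((1 / (n : ℝ)) * ∑ j, condFeatExp f θE k (ys j)))
          + ∑ k, (θ' k - θE k) * featExp f θ' k := by
      rw [← Finset.sum_add_distrib]
      exact Finset.sum_congr rfl fun k _ => by ring
    rw [this]
    linarith
  -- step 3: bound each term
  have h5 : ∀ k, (θE k - θ' k) *
      ((1 / (n : ℝ)) * (∑ j, condFeatExp f θE k (ys j)) - featExp f θ' k)
      ≤ ε / (2 * (K : ℝ)) + εs := by
    intro k
    have habs : |θE k - θ' k| ≤ 1 := by
      have h1 := hθE k; have h2 := hθ' k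
      rw [Set.mem_Icc] at h1 h2
      rw [abs_le]; constructor <;> linarith
    calc (θE k - θ' k) * ((1 / (n : ℝ)) * (∑ j, condFeatExp f θE k (ys j)) - featExp f θ' k)
        ≤ |(θE k - θ' k) * ((1 / (n : ℝ)) * (∑ j, condFeatExp f θE k (ys j)) - featExp f θ' k)| :=
          le_abs_self _
      _ = |θE k - θ' k| * |(1 / (n : ℝ)) * (∑ j, condFeatExp f θE k (ys j)) - featExp f θ' k| :=
          abs_mul _ _
      _ ≤ 1 * (ε / (2 * (K : ℝ)) + εs) :=
          mul_le_mul habs (hclose k) (abs_nonneg _) zero_le_one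
      _ = ε / (2 * (K : ℝ)) + εs := one_mul _
  have h6 : ∑ k, (θE k - θ' k) *
      ((1 / (n : ℝ)) * (∑ j, condFeatExp f θE k (ys j)) - featExp f θ' k)
      ≤ (K : ℝ) * (ε / (2 * (K : ℝ)) + εs) := by
    calc _ ≤ ∑ _k : Fin K, (ε / (2 * (K : ℝ)) + εs) := Finset.sum_le_sum fun k _ => h5 k
      _ = (K : ℝ) * (ε / (2 * (K : ℝ)) + εs) := by
          rw [Finset.sum_const, Finset.card_univ, Fintype.card_fin, nsmul_eq_mul]
  have h7 : (K : ℝ) * (ε / (2 * (K : ℝ)) + εs) = ε / 2 + (K : ℝ) * εs := by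
    field_simp
  have := h4.trans h6
  rw [h7] at this
  nlinarith [hKR, hεs, hε]
end

section
/- Let 𝕏 be a nonempty finite set, K a positive integer, γ ∈ (0,1), and f₁,…,f_K : 𝕏 → [0, 1/(1−γ)]. Let p be a probability mass function on 𝕏 and let X₁,…,X_n be i.i.d. random variables with law p; write φ̂_k = (1/n) Σ_{j=1}^n f_k(X_j) for the empirical feature expectations. Let ε > 0, ε_s ≥ 0, δ_s ∈ [0,1], and let σ₁,…,σ_K be real-valued random variables (sampling-based estimates of the feature expectations) defined on the same probability space such that P(∃ k: |σ_k − φ̂_k| > ε_s) ≤ δ_s. Then with probability at least 1 − (δ + δ_s), where δ = 2K·exp(−n·ε²·(1−γ)²/(2K²)), it holds simultaneously for all k ∈ {1,…,K} that |E_p[f_k] − σ_k| ≤ ε/(2K) + ε_s. (This is the paper's Lemma 2, constraint bounds for incremental latent maximum-entropy IRL.) -/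
/-!
Each centred summand `f k (X j) - E_p[f k]` lies in an interval of length `1 / (1 - γ)`,
so by Hoeffding's lemma it is sub-Gaussian with parameter `1 / (4 (1 - γ)²)`; by independence
the centred sum is sub-Gaussian with parameter `n / (4 (1 - γ)²)`, and the Chernoff bound on
both tails gives `P(|φ̂_k - E_p[f k]| > ε / (2K)) ≤ 2 exp (-n ε² (1 - γ)² / (2K²))`.
The triangle inequality `|E_p[f k] - σ_k| ≤ |E_p[f k] - φ̂_k| + |φ̂_k - σ_k|` and a union
bound over `k` and the event controlled by `δs` finish the proof.
-/

open Finset MeasureTheory ProbabilityTheory Real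
open scoped NNReal

lemma ProbabilityTheory.HasSubgaussianMGF.measure_abs_ge_le {Ω : Type*} [MeasurableSpace Ω]
    {μ : Measure Ω} [IsFiniteMeasure μ] {Y : Ω → ℝ} {c : ℝ≥0}
    (h : HasSubgaussianMGF Y c μ) {t : ℝ} (ht : 0 ≤ t) :
    μ {ω | t ≤ |Y ω|} ≤ ENNReal.ofReal (2 * exp (-t ^ 2 / (2 * c))) := by
  have hsplit : {ω | t ≤ |Y ω|} = {ω | t ≤ Y ω} ∪ {ω | t ≤ (-Y) ω} := by
    ext ω; simp [le_abs]
  have hexp : 0 ≤ exp (-t ^ 2 / (2 * c)) := (exp_pos _).le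
  calc μ {ω | t ≤ |Y ω|} ≤ μ {ω | t ≤ Y ω} + μ {ω | t ≤ (-Y) ω} :=
        hsplit ▸ measure_union_le _ _
    _ = ENNReal.ofReal (μ.real {ω | t ≤ Y ω})
          + ENNReal.ofReal (μ.real {ω | t ≤ (-Y) ω}) := by
        rw [ofReal_measureReal, ofReal_measureReal]
    _ ≤ ENNReal.ofReal (exp (-t ^ 2 / (2 * c))) + ENNReal.ofReal (exp (-t ^ 2 / (2 * c))) := by
        gcongr
        exacts [h.measure_ge_le ht, h.neg.measure_ge_le ht]
    _ = ENNReal.ofReal (2 * exp (-t ^ 2 / (2 * c))) := by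
        rw [← ENNReal.ofReal_add hexp hexp, ← two_mul]

section FiniteLaw

variable {X Ω : Type*} [Fintype X] [MeasurableSpace X] [MeasurableSingletonClass X]
  [MeasurableSpace Ω] {μ : Measure Ω} {p : X → ℝ}

lemma integral_comp_eq_sum_of_law [IsFiniteMeasure μ] {T : Ω → X} (hT : Measurable T)
    (hp0 : ∀ x, 0 ≤ p x) (hlaw : ∀ x, μ {ω | T ω = x} = ENNReal.ofReal (p x)) (g : X → ℝ) :
    ∫ ω, g (T ω) ∂μ = ∑ x, p x * g x := by
  rw [← integral_map hT.aemeasurable (measurable_of_finite g).aestronglyMeasurable,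
    integral_fintype .of_finite]
  refine Finset.sum_congr rfl fun x _ => ?_
  rw [measureReal_def, Measure.map_apply hT (measurableSet_singleton x), smul_eq_mul]
  change (μ {ω | T ω = x}).toReal * g x = _
  rw [hlaw x, ENNReal.toReal_ofReal (hp0 x)]

lemma hasSubgaussianMGF_comp_sub_sum_of_law [IsProbabilityMeasure μ] {T : Ω → X}
    (hT : Measurable T) (hp0 : ∀ x, 0 ≤ p x)
    (hlaw : ∀ x, μ {ω | T ω = x} = ENNReal.ofReal (p x)) {g : X → ℝ} {a b : ℝ}
    (hg : ∀ x, g x ∈ Set.Icc a b) :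
    HasSubgaussianMGF (fun ω => g (T ω) - ∑ x, p x * g x) ((‖b - a‖₊ / 2) ^ 2) μ := by
  rw [← integral_comp_eq_sum_of_law hT hp0 hlaw g]
  exact hasSubgaussianMGF_of_mem_Icc ((measurable_of_finite g).comp hT).aemeasurable
    (ae_of_all _ fun ω => hg (T ω))

lemma measure_lt_abs_empiricalMean_sub_le [IsProbabilityMeasure μ] {n : ℕ} (hn : 0 < n)
    {Xs : Fin n → Ω → X} (hmeas : ∀ j, Measurable (Xs j)) (hindep : iIndepFun Xs μ)
    (hp0 : ∀ x, 0 ≤ p x) (hlaw : ∀ j x, μ {ω | Xs j ω = x} = ENNReal.ofReal (p x))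
    {g : X → ℝ} {a b : ℝ} (hg : ∀ x, g x ∈ Set.Icc a b) {t : ℝ} (ht : 0 ≤ t) :
    μ {ω | t < |(1 / (n : ℝ)) * ∑ j, g (Xs j ω) - ∑ x, p x * g x|}
      ≤ ENNReal.ofReal (2 * exp (-(2 * n * t ^ 2 / (b - a) ^ 2))) := by
  set m := ∑ x, p x * g x
  have hn' : (n : ℝ) ≠ 0 := by positivity
  have hcentered : iIndepFun (fun j ω => g (Xs j ω) - m) μ :=
    hindep.comp (fun _ x => g x - m) fun _ => measurable_of_finite _
  have hsum : HasSubgaussianMGF (fun ω => ∑ j, (g (Xs j ω) - m))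
      (∑ _j : Fin n, (‖b - a‖₊ / 2) ^ 2) μ :=
    HasSubgaussianMGF.sum_of_iIndepFun hcentered fun j _ =>
      hasSubgaussianMGF_comp_sub_sum_of_law (hmeas j) hp0 (hlaw j) hg
  have hsub : {ω | t < |(1 / (n : ℝ)) * ∑ j, g (Xs j ω) - m|}
      ⊆ {ω | n * t ≤ |∑ j, (g (Xs j ω) - m)|} := by
    intro ω hω
    have hscale : ∑ j, (g (Xs j ω) - m) = n * ((1 / n) * ∑ j, g (Xs j ω) - m) := by
      simp only [sum_sub_distrib, sum_const, card_univ, Fintype.card_fin, nsmul_eq_mul]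
      field_simp
    rw [Set.mem_ofPred_eq, hscale, abs_mul, Nat.abs_cast]
    exact mul_le_mul_of_nonneg_left hω.le (Nat.cast_nonneg n)
  refine (measure_mono hsub).trans ((hsum.measure_abs_ge_le (by positivity)).trans_eq ?_)
  push_cast
  rw [sum_const, card_univ, Fintype.card_fin, nsmul_eq_mul, div_pow, Real.norm_eq_abs,
    sq_abs]
  field_simp

end FiniteLaw

lemma ofReal_one_sub_le_measure_of_measure_compl_le {Ω : Type*} [MeasurableSpace Ω]
    {μ : Measure Ω} [IsProbabilityMeasure μ] {s : Set Ω} {q : ℝ} (hq : 0 ≤ q)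
    (h : μ sᶜ ≤ ENNReal.ofReal q) : ENNReal.ofReal (1 - q) ≤ μ s := by
  rw [ENNReal.ofReal_sub _ hq, ENNReal.ofReal_one, tsub_le_iff_right]
  calc 1 = μ (s ∪ sᶜ) := by rw [Set.union_compl_self, measure_univ]
    _ ≤ μ s + μ sᶜ := measure_union_le _ _
    _ ≤ μ s + ENNReal.ofReal q := by gcongr

lemma compl_setOf_forall_abs_sub_le_subset {ι Ω : Type*} (a : ι → ℝ) (b c : ι → Ω → ℝ)
    (r s : ℝ) :
    {ω | ∀ i, |a i - c i ω| ≤ r + s}ᶜ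
      ⊆ {ω | ∃ i, s < |c i ω - b i ω|} ∪ ⋃ i, {ω | r < |b i ω - a i|} := by
  intro ω hω
  simp only [Set.mem_compl_iff, Set.mem_ofPred_eq, not_forall, not_le] at hω
  obtain ⟨i, hi⟩ := hω
  rcases lt_or_ge s |c i ω - b i ω| with hs | hs
  · exact Or.inl ⟨i, hs⟩
  · refine Or.inr (Set.mem_iUnion.2 ⟨i, ?_⟩)
    have htri := abs_sub_le (a i) (b i ω) (c i ω)
    rw [abs_sub_comm (c i ω)] at hs
    rw [Set.mem_ofPred_eq, abs_sub_comm]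
    linarith

theorem constraint_bounds_incremental_latent_maxent_general
    {X : Type*} [Fintype X]
    [MeasurableSpace X] [MeasurableSingletonClass X]
    {K : ℕ} (hK : 0 < K) {γ : ℝ} (hγ : γ ∈ Set.Ioo (0:ℝ) 1)
    (f : Fin K → X → ℝ) (hf : ∀ k x, f k x ∈ Set.Icc (0:ℝ) (1 / (1 - γ)))
    (p : X → ℝ) (hp0 : ∀ x, 0 ≤ p x)
    {n : ℕ} (hn : 0 < n)
    {Ω : Type*} [MeasurableSpace Ω] (μ : Measure Ω) [IsProbabilityMeasure μ]
    (Xs : Fin n → Ω → X) (hmeas : ∀ j, Measurable (Xs j))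
    (hindep : iIndepFun Xs μ)
    (hlaw : ∀ j x, μ {ω | Xs j ω = x} = ENNReal.ofReal (p x))
    (ε εs δs : ℝ) (hε : 0 < ε) (hδs : δs ∈ Set.Icc (0:ℝ) 1)
    (σ : Fin K → Ω → ℝ)
    (hσ : μ {ω | ∃ k : Fin K,
        εs < |σ k ω - (1 / (n : ℝ)) * ∑ j, f k (Xs j ω)|} ≤ ENNReal.ofReal δs) :
    ENNReal.ofReal
        (1 - (2 * (K : ℝ) *
            Real.exp (-((n : ℝ) * ε ^ 2 * (1 - γ) ^ 2) / (2 * (K : ℝ) ^ 2)) + δs)) ≤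
      μ {ω | ∀ k : Fin K,
          |(∑ x : X, p x * f k x) - σ k ω| ≤ ε / (2 * (K : ℝ)) + εs} := by
  set e := Real.exp (-((n : ℝ) * ε ^ 2 * (1 - γ) ^ 2) / (2 * (K : ℝ) ^ 2))
  have hK' : (K : ℝ) ≠ 0 := by positivity
  have hγ' : 1 - γ ≠ 0 := sub_ne_zero.2 hγ.2.ne'
  have hempirical : ∀ k, μ {ω | ε / (2 * K) <
      |(1 / (n : ℝ)) * ∑ j, f k (Xs j ω) - ∑ x, p x * f k x|} ≤ ENNReal.ofReal (2 * e) := by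
    intro k
    convert measure_lt_abs_empiricalMean_sub_le hn hmeas hindep hp0 hlaw (hf k)
      (by positivity : 0 ≤ ε / (2 * K)) using 5
    field_simp
    ring
  have hbad := compl_setOf_forall_abs_sub_le_subset (fun k => ∑ x, p x * f k x)
    (fun k ω => (1 / (n : ℝ)) * ∑ j, f k (Xs j ω)) σ (ε / (2 * K)) εs
  refine ofReal_one_sub_le_measure_of_measure_compl_le (add_nonneg (by positivity) hδs.1) ?_
  calc μ _ ≤ _ := (measure_mono hbad).trans (measure_union_le _ _)
    _ ≤ ENNReal.ofReal δs + ∑ _k : Fin K, ENNReal.ofReal (2 * e) :=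
        add_le_add hσ
          ((measure_iUnion_fintype_le _ _).trans (sum_le_sum fun k _ => hempirical k))
    _ = ENNReal.ofReal (2 * K * e + δs) := by
        rw [sum_const, card_univ, Fintype.card_fin, nsmul_eq_mul, ← ENNReal.ofReal_natCast,
          ← ENNReal.ofReal_mul (Nat.cast_nonneg K), ← ENNReal.ofReal_add hδs.1 (by positivity),
          add_comm]
        congr 1
        ring

/-- Paper's Lemma 2 (constraint bounds for incremental latent max-entropy IRL):
with `X₁,…,X_n` i.i.d. from `p`, features valued in `[0, 1/(1−γ)]`, and
sampling-based estimates `σ_k` of the empirical feature expectations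
`φ̂_k = (1/n)∑_j f_k(X_j)` satisfying `P(∃k: |σ_k − φ̂_k| > ε_s) ≤ δ_s`, it
holds with probability at least `1 − (δ + δ_s)`, where
`δ = 2K·exp(−n·ε²·(1−γ)²/(2K²))`, that simultaneously for all `k`,
`|E_p[f_k] − σ_k| ≤ ε/(2K) + ε_s`. -/
theorem constraint_bounds_incremental_latent_maxent
    {X : Type*} [Fintype X] [Nonempty X]
    [MeasurableSpace X] [MeasurableSingletonClass X]
    {K : ℕ} (hK : 0 < K) {γ : ℝ} (hγ : γ ∈ Set.Ioo (0:ℝ) 1)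
    (f : Fin K → X → ℝ) (hf : ∀ k x, f k x ∈ Set.Icc (0:ℝ) (1 / (1 - γ)))
    (p : X → ℝ) (hp0 : ∀ x, 0 ≤ p x) (hp1 : ∑ x : X, p x = 1)
    {n : ℕ} (hn : 0 < n)
    {Ω : Type*} [MeasurableSpace Ω] (μ : Measure Ω) [IsProbabilityMeasure μ]
    (Xs : Fin n → Ω → X) (hmeas : ∀ j, Measurable (Xs j))
    (hindep : iIndepFun Xs μ)
    (hlaw : ∀ j x, μ {ω | Xs j ω = x} = ENNReal.ofReal (p x))
    (ε εs δs : ℝ) (hε : 0 < ε) (hεs : 0 ≤ εs) (hδs : δs ∈ Set.Icc (0:ℝ) 1)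
    (σ : Fin K → Ω → ℝ)
    (hσ : μ {ω | ∃ k : Fin K,
        εs < |σ k ω - (1 / (n : ℝ)) * ∑ j, f k (Xs j ω)|} ≤ ENNReal.ofReal δs) :
    ENNReal.ofReal
        (1 - (2 * (K : ℝ) *
            Real.exp (-((n : ℝ) * ε ^ 2 * (1 - γ) ^ 2) / (2 * (K : ℝ) ^ 2)) + δs)) ≤
      μ {ω | ∀ k : Fin K,
          |(∑ x : X, p x * f k x) - σ k ω| ≤ ε / (2 * (K : ℝ)) + εs} :=
  constraint_bounds_incremental_latent_maxent_general hK hγ f hf p hp0 hn μ Xs hmeas hindep hlaw ε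
    εs δs hε hδs σ hσ
end
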